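/- arXiv:2502.08627 — 3 statements merged into one kernel-verified Lean document; each statement's English description precedes it below -/
import Mathlib

section
/- Let g : (0,∞) → (0,∞) be C¹ with p⁻ − 2 ≤ t g'(t)/g(t) ≤ p⁺ − 2 for all t > 0, where 1 < p⁻ ≤ p⁺. Then the function G(t) := ∫₀ᵗ g(s)s ds satisfies p⁻ ≤ t²g(t)/G(t) ≤ p⁺ for all t > 0. -/
open intervalIntegral

private lemma aux_hasDerivAt (g g' : ℝ → ℝ)
    (hderiv : ∀ t > (0:ℝ), HasDerivAt g (g' t) t) (q : ℝ) (s : ℝ) (hs : 0 < s) :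
    HasDerivAt (fun x => x ^ (2 - q) * g x)
      (s ^ (1 - q) * ((2 - q) * g s + s * g' s)) s := by
  have h1 : HasDerivAt (fun x : ℝ => x ^ (2 - q)) ((2 - q) * s ^ (2 - q - 1)) s :=
    Real.hasDerivAt_rpow_const (Or.inl hs.ne')
  have h2 : HasDerivAt (fun x => x ^ (2 - q) * g x) _ s := h1.mul (hderiv s hs)
  convert h2 using 1
  have hrw : s ^ (2 - q) = s ^ (1 - q) * s := by
    rw [← Real.rpow_add_one hs.ne' (1 - q)]; ring_nf
  rw [show (2 - q - 1) = 1 - q by ring, hrw]; ring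

private lemma aux_mono (g g' : ℝ → ℝ)
    (hgpos : ∀ t > (0:ℝ), 0 < g t)
    (hderiv : ∀ t > (0:ℝ), HasDerivAt g (g' t) t) (q : ℝ)
    (h : ∀ t > (0:ℝ), q - 2 ≤ t * g' t / g t) :
    MonotoneOn (fun s => s ^ (2 - q) * g s) (Set.Ioi (0:ℝ)) := by
  apply monotoneOn_of_deriv_nonneg (convex_Ioi 0)
  · intro s hs
    exact ((aux_hasDerivAt g g' hderiv q s hs).continuousAt).continuousWithinAt
  · rw [interior_Ioi]
    intro s hs
    exact (aux_hasDerivAt g g' hderiv q s hs).differentiableAt.differentiableWithinAt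
  · rw [interior_Ioi]
    intro s hs
    rw [(aux_hasDerivAt g g' hderiv q s hs).deriv]
    have hsp : (0:ℝ) < s := hs
    have hg := hgpos s hsp
    have h1 : (q - 2) * g s ≤ s * g' s := (le_div_iff₀ hg).mp (h s hsp)
    have h2 : 0 ≤ (2 - q) * g s + s * g' s := by nlinarith
    exact mul_nonneg (Real.rpow_nonneg hsp.le _) h2

private lemma aux_anti (g g' : ℝ → ℝ)
    (hgpos : ∀ t > (0:ℝ), 0 < g t)
    (hderiv : ∀ t > (0:ℝ), HasDerivAt g (g' t) t) (q : ℝ)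
    (h : ∀ t > (0:ℝ), t * g' t / g t ≤ q - 2) :
    AntitoneOn (fun s => s ^ (2 - q) * g s) (Set.Ioi (0:ℝ)) := by
  apply antitoneOn_of_deriv_nonpos (convex_Ioi 0)
  · intro s hs
    exact ((aux_hasDerivAt g g' hderiv q s hs).continuousAt).continuousWithinAt
  · rw [interior_Ioi]
    intro s hs
    exact (aux_hasDerivAt g g' hderiv q s hs).differentiableAt.differentiableWithinAt
  · rw [interior_Ioi]
    intro s hs
    rw [(aux_hasDerivAt g g' hderiv q s hs).deriv]
    have hsp : (0:ℝ) < s := hs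
    have hg := hgpos s hsp
    have h1 : s * g' s ≤ (q - 2) * g s := (div_le_iff₀ hg).mp (h s hsp)
    have h2 : (2 - q) * g s + s * g' s ≤ 0 := by nlinarith
    exact mul_nonpos_of_nonneg_of_nonpos (Real.rpow_nonneg hsp.le _) h2

/-- If `g : (0,∞) → (0,∞)` is C¹ with
`p⁻ − 2 ≤ t g'(t)/g(t) ≤ p⁺ − 2`, then `G(t) = ∫₀ᵗ g(s) s ds` satisfies
`p⁻ ≤ t² g(t)/G(t) ≤ p⁺` for all `t > 0`. -/
theorem stmt_5 (g g' G : ℝ → ℝ)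
    (hgpos : ∀ t > (0:ℝ), 0 < g t)
    (hderiv : ∀ t > (0:ℝ), HasDerivAt g (g' t) t)
    (hderivcont : ContinuousOn g' (Set.Ioi 0))
    (hint : ∀ t > (0:ℝ), IntervalIntegrable (fun s => g s * s) MeasureTheory.volume 0 t)
    (hG : ∀ t, G t = ∫ s in (0:ℝ)..t, g s * s)
    (pm pp : ℝ) (hpm : 1 < pm) (hpmpp : pm ≤ pp)
    (hlow : ∀ t > (0:ℝ), pm - 2 ≤ t * g' t / g t)
    (hup : ∀ t > (0:ℝ), t * g' t / g t ≤ pp - 2) :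
    ∀ t > (0:ℝ), pm ≤ t ^ 2 * g t / G t ∧ t ^ 2 * g t / G t ≤ pp := by
  have hmono := aux_mono g g' hgpos hderiv pm hlow
  have hanti := aux_anti g g' hgpos hderiv pp hup
  intro t ht
  have hpm0 : (0:ℝ) < pm := lt_trans one_pos hpm
  have hpp0 : (0:ℝ) < pp := lt_of_lt_of_le hpm0 hpmpp
  have hgt := hgpos t ht
  -- upper pointwise bound: g s * s ≤ t^(2-pm) * g t * s^(pm-1) on [0, t]
  have hub : ∀ s ∈ Set.Icc (0:ℝ) t, g s * s ≤ t ^ (2 - pm) * g t * s ^ (pm - 1) := by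
    intro s hsc
    rcases eq_or_lt_of_le hsc.1 with h0 | hsp
    · rw [← h0]
      simp [Real.zero_rpow (by linarith : pm - 1 ≠ 0)]
    · have hφ : s ^ (2 - pm) * g s ≤ t ^ (2 - pm) * g t :=
        hmono (Set.mem_Ioi.mpr hsp) (Set.mem_Ioi.mpr ht) hsc.2
      have hsk : (0:ℝ) < s ^ (pm - 1) := Real.rpow_pos_of_pos hsp _
      have := mul_le_mul_of_nonneg_right hφ hsk.le
      have key : s ^ (2 - pm) * s ^ (pm - 1) = s := by
        rw [← Real.rpow_add hsp, show 2 - pm + (pm - 1) = (1:ℝ) by ring, Real.rpow_one]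
      calc g s * s = s ^ (2 - pm) * g s * s ^ (pm - 1) := by linear_combination -(g s) * key
        _ ≤ t ^ (2 - pm) * g t * s ^ (pm - 1) := this
  -- lower pointwise bound: t^(2-pp) * g t * s^(pp-1) ≤ g s * s on [0, t]
  have hlb : ∀ s ∈ Set.Icc (0:ℝ) t, t ^ (2 - pp) * g t * s ^ (pp - 1) ≤ g s * s := by
    intro s hsc
    rcases eq_or_lt_of_le hsc.1 with h0 | hsp
    · rw [← h0]
      simp [Real.zero_rpow (by linarith : pp - 1 ≠ 0)]
    · have hψ : t ^ (2 - pp) * g t ≤ s ^ (2 - pp) * g s :=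
        hanti (Set.mem_Ioi.mpr hsp) (Set.mem_Ioi.mpr ht) hsc.2
      have hsk : (0:ℝ) < s ^ (pp - 1) := Real.rpow_pos_of_pos hsp _
      have := mul_le_mul_of_nonneg_right hψ hsk.le
      have key : s ^ (2 - pp) * s ^ (pp - 1) = s := by
        rw [← Real.rpow_add hsp, show 2 - pp + (pp - 1) = (1:ℝ) by ring, Real.rpow_one]
      calc t ^ (2 - pp) * g t * s ^ (pp - 1) ≤ s ^ (2 - pp) * g s * s ^ (pp - 1) := this
        _ = g s * s := by linear_combination g s * key
  -- integrability of rpow comparison functions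
  have hintm : IntervalIntegrable (fun s : ℝ => t ^ (2 - pm) * g t * s ^ (pm - 1))
      MeasureTheory.volume 0 t :=
    (intervalIntegral.intervalIntegrable_rpow' (by linarith)).const_mul _
  have hintp : IntervalIntegrable (fun s : ℝ => t ^ (2 - pp) * g t * s ^ (pp - 1))
      MeasureTheory.volume 0 t :=
    (intervalIntegral.intervalIntegrable_rpow' (by linarith)).const_mul _
  -- values of comparison integrals
  have hvalm : (∫ s in (0:ℝ)..t, t ^ (2 - pm) * g t * s ^ (pm - 1))
      = t ^ 2 * g t / pm := by
    rw [intervalIntegral.integral_const_mul, integral_rpow (Or.inl (by linarith)),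
      show pm - 1 + 1 = pm by ring, Real.zero_rpow hpm0.ne', sub_zero]
    have key : t ^ (2 - pm) * t ^ pm = t ^ (2:ℕ) := by
      rw [← Real.rpow_add ht, show 2 - pm + pm = (2:ℝ) by ring, ← Real.rpow_natCast t 2]
      norm_num
    field_simp
    linear_combination key
  have hvalp : (∫ s in (0:ℝ)..t, t ^ (2 - pp) * g t * s ^ (pp - 1))
      = t ^ 2 * g t / pp := by
    rw [intervalIntegral.integral_const_mul, integral_rpow (Or.inl (by linarith)),
      show pp - 1 + 1 = pp by ring, Real.zero_rpow hpp0.ne', sub_zero]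
    have key : t ^ (2 - pp) * t ^ pp = t ^ (2:ℕ) := by
      rw [← Real.rpow_add ht, show 2 - pp + pp = (2:ℝ) by ring, ← Real.rpow_natCast t 2]
      norm_num
    field_simp
    linear_combination key
  -- integral comparisons
  have hGle : G t ≤ t ^ 2 * g t / pm := by
    rw [hG t, ← hvalm]
    exact intervalIntegral.integral_mono_on ht.le (hint t ht) hintm hub
  have hGge : t ^ 2 * g t / pp ≤ G t := by
    rw [hG t, ← hvalp]
    exact intervalIntegral.integral_mono_on ht.le hintp (hint t ht) hlb
  have ht2g : (0:ℝ) < t ^ 2 * g t := by positivity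
  have hGpos : 0 < G t := lt_of_lt_of_le (by positivity) hGge
  constructor
  · rw [le_div_iff₀ hGpos]
    calc pm * G t ≤ pm * (t ^ 2 * g t / pm) := by nlinarith
      _ = t ^ 2 * g t := by field_simp
  · rw [div_le_iff₀ hGpos]
    calc t ^ 2 * g t = pp * (t ^ 2 * g t / pp) := by field_simp
      _ ≤ pp * G t := by nlinarith
end

section
/- Let G be an even N-function with G(t) = ∫₀^{|t|} g(s)s ds satisfying: t ↦ G(√t) is convex on [0,∞), and p⁻ − 2 ≤ t g'(t)/g(t) ≤ p⁺ − 2 for all t > 0. Then there exists a constant C > 0 such that for all a, b ∈ ℝ: (g(|a|)a − g(|b|)b)(a − b) ≥ C·G(|a − b|). -/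
open intervalIntegral

set_option maxHeartbeats 1000000 in
/-- For an even N-function `G(t) = ∫₀^{|t|} g(s) s ds` with
`G(√t)` convex and `p⁻ − 2 ≤ t g'(t)/g(t) ≤ p⁺ − 2`, there is `C > 0` such that
`(g(|a|) a − g(|b|) b)(a − b) ≥ C G(|a − b|)` for all `a, b ∈ ℝ`. -/
theorem stmt_7 (g g' G : ℝ → ℝ)
    (hG : ∀ t : ℝ, G t = ∫ s in (0:ℝ)..|t|, g s * s)
    (hgeven : ∀ t : ℝ, g (-t) = g t)
    (hg0 : g 0 = 0)
    (hgpos : ∀ t > (0:ℝ), 0 < g t)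
    (hgmono : MonotoneOn g (Set.Ici 0))
    (hginfty : Filter.Tendsto (fun t => g t * t) Filter.atTop Filter.atTop)
    (hconv : ConvexOn ℝ (Set.Ici 0) (fun t => G (Real.sqrt t)))
    (hderiv : ∀ t > (0:ℝ), HasDerivAt g (g' t) t)
    (pm pp : ℝ) (hpm : 1 < pm) (hpmpp : pm ≤ pp)
    (hlow : ∀ t > (0:ℝ), pm - 2 ≤ t * g' t / g t)
    (hup : ∀ t > (0:ℝ), t * g' t / g t ≤ pp - 2) :
    ∃ C > (0:ℝ), ∀ a b : ℝ,
      C * G (|a - b|) ≤ (g |a| * a - g |b| * b) * (a - b) := by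
  have h2pos : (0:ℝ) < (2:ℝ) ^ ((2:ℝ) - pp) := Real.rpow_pos_of_pos two_pos _
  set D : ℝ := (2:ℝ) ^ ((2:ℝ) - pp) with hDdef
  have hpm1 : (0:ℝ) < pm - 1 := by linarith
  set C : ℝ := min 1 (min (pm - 1) D) with hCdef
  have hCpos : 0 < C := lt_min one_pos (lt_min hpm1 h2pos)
  have hC1 : C ≤ 1 := min_le_left _ _
  have hCpm : C ≤ pm - 1 := le_trans (min_le_right _ _) (min_le_left _ _)
  have hCD : C ≤ D := le_trans (min_le_right _ _) (min_le_right _ _)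
  have hgnn : ∀ t : ℝ, 0 ≤ t → 0 ≤ g t := by
    intro t ht
    have := hgmono (Set.mem_Ici.2 (le_refl (0:ℝ))) (Set.mem_Ici.2 ht) ht
    rwa [hg0] at this
  -- integrability of s ↦ g s * s on [0, t]
  have hInt : ∀ t : ℝ, 0 ≤ t →
      IntervalIntegrable (fun s => g s * s) MeasureTheory.volume 0 t := by
    intro t ht
    apply MonotoneOn.intervalIntegrable
    intro x hx y hy hxy
    rw [Set.uIcc_of_le ht] at hx hy
    exact mul_le_mul (hgmono (Set.mem_Ici.2 hx.1) (Set.mem_Ici.2 hy.1) hxy) hxy hx.1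
      (hgnn y hy.1)
  have hGnn : ∀ t : ℝ, 0 ≤ G t := by
    intro t
    rw [hG]
    apply intervalIntegral.integral_nonneg (abs_nonneg t)
    intro u hu
    exact mul_nonneg (hgnn u hu.1) hu.1
  have hGle : ∀ t : ℝ, 0 ≤ t → G t ≤ g t * (t * t) / 2 := by
    intro t ht
    rw [hG, abs_of_nonneg ht]
    have h1 : (∫ s in (0:ℝ)..t, g s * s) ≤ ∫ s in (0:ℝ)..t, g t * s := by
      apply intervalIntegral.integral_mono_on ht (hInt t ht)
        ((continuous_const.mul continuous_id).intervalIntegrable 0 t)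
      intro u hu
      exact mul_le_mul_of_nonneg_right
        (hgmono (Set.mem_Ici.2 hu.1) (Set.mem_Ici.2 ht) hu.2) hu.1
    have h2 : (∫ s in (0:ℝ)..t, g t * s) = g t * (t * t) / 2 := by
      rw [intervalIntegral.integral_const_mul, integral_id]
      ring
    linarith
  -- doubling: g(t/2) ≥ 2^(2-pp) g(t)
  have hdouble : ∀ t : ℝ, 0 < t → D * g t ≤ g (t / 2) := by
    intro t ht
    have ht2 : (0:ℝ) < t / 2 := by linarith
    set c : ℝ := (2:ℝ) - pp with hc
    set φ : ℝ → ℝ := fun s => g s * s ^ c with hφ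
    have hφd : ∀ s : ℝ, 0 < s → HasDerivAt φ
        (g' s * s ^ c + g s * (c * s ^ (c - 1))) s := by
      intro s hs
      exact (hderiv s hs).mul (Real.hasDerivAt_rpow_const (Or.inl hs.ne'))
    have hanti : AntitoneOn φ (Set.Icc (t / 2) t) := by
      apply antitoneOn_of_deriv_nonpos (convex_Icc _ _)
      · intro s hs
        exact (hφd s (lt_of_lt_of_le ht2 hs.1)).continuousAt.continuousWithinAt
      · intro s hs
        rw [interior_Icc] at hs
        exact (hφd s (lt_trans ht2 hs.1)).differentiableAt.differentiableWithinAt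
      · intro s hs
        rw [interior_Icc] at hs
        have hs0 : 0 < s := lt_trans ht2 hs.1
        rw [(hφd s hs0).deriv]
        have hge : 0 < g s := hgpos s hs0
        have hup' : s * g' s ≤ (pp - 2) * g s := by
          have := hup s hs0
          rw [div_le_iff₀ hge] at this
          linarith
        have hsc : s ^ c = s ^ (c - 1) * s := by
          rw [← Real.rpow_add_one hs0.ne' (c - 1)]
          norm_num
        have hs1 : (0:ℝ) < s ^ (c - 1) := Real.rpow_pos_of_pos hs0 _
        have : g' s * s ^ c + g s * (c * s ^ (c - 1))
            = s ^ (c - 1) * (s * g' s + c * g s) := by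
          rw [hsc]; ring
        rw [this]
        apply mul_nonpos_of_nonneg_of_nonpos hs1.le
        have : c * g s = (2 - pp) * g s := by rw [hc]
        nlinarith
    have h1 : φ t ≤ φ (t / 2) := by
      apply hanti (Set.mem_Icc.2 ⟨le_refl _, by linarith⟩)
        (Set.mem_Icc.2 ⟨by linarith, le_refl _⟩) (by linarith)
    have htc : (0:ℝ) < t ^ c := Real.rpow_pos_of_pos ht _
    have h2c : (0:ℝ) < (2:ℝ) ^ c := h2pos
    have hsplit : (t / 2) ^ c = t ^ c / (2:ℝ) ^ c :=
      Real.div_rpow ht.le (by norm_num) c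
    have h2 : g t * t ^ c ≤ g (t / 2) * (t ^ c / (2:ℝ) ^ c) := by
      rw [← hsplit]; exact h1
    rw [hDdef]
    have e : g (t / 2) * (t ^ c / (2:ℝ) ^ c) = (g (t / 2) / (2:ℝ) ^ c) * t ^ c := by ring
    rw [e] at h2
    have h3 : g t ≤ g (t / 2) / (2:ℝ) ^ c := le_of_mul_le_mul_right h2 htc
    have h4 : g t * (2:ℝ) ^ c ≤ g (t / 2) := (le_div_iff₀ h2c).1 h3
    linarith
  -- mean value estimate for 0 < b < a
  have hkeyMVT : ∀ b a : ℝ, 0 < b → b < a →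
      (pm - 1) * g b * (a - b) ≤ g a * a - g b * b := by
    intro b a hb hba
    have hfd : ∀ s : ℝ, 0 < s → HasDerivAt (fun u => g u * u) (g' s * s + g s) s := by
      intro s hs
      have h := (hderiv s hs).mul (hasDerivAt_id s)
      exact h.congr_deriv (by simp)
    obtain ⟨ξ, hξ, hslope⟩ := exists_hasDerivAt_eq_slope (fun u => g u * u)
      (fun u => g' u * u + g u) hba
      (fun s hs => (hfd s (lt_of_lt_of_le hb hs.1)).continuousAt.continuousWithinAt)
      (fun s hs => hfd s (lt_trans hb hs.1))
    have hslope' : g' ξ * ξ + g ξ = (g a * a - g b * b) / (a - b) := hslope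
    have hξ0 : 0 < ξ := lt_trans hb hξ.1
    have hgξ : 0 < g ξ := hgpos ξ hξ0
    have hab : (0:ℝ) < a - b := by linarith
    have hlow' : (pm - 2) * g ξ ≤ ξ * g' ξ := by
      have h := hlow ξ hξ0
      rw [le_div_iff₀ hgξ] at h
      linarith
    have hfξ : (pm - 1) * g ξ ≤ g' ξ * ξ + g ξ := by nlinarith [hlow']
    have hD2 : g a * a - g b * b = (g' ξ * ξ + g ξ) * (a - b) := by
      rw [hslope']
      field_simp
    have hgb : g b ≤ g ξ := hgmono (Set.mem_Ici.2 hb.le) (Set.mem_Ici.2 hξ0.le) hξ.1.le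
    have s1 : (pm - 1) * g ξ * (a - b) ≤ (g' ξ * ξ + g ξ) * (a - b) :=
      mul_le_mul_of_nonneg_right hfξ hab.le
    have s2 : (pm - 1) * g b ≤ (pm - 1) * g ξ := mul_le_mul_of_nonneg_left hgb hpm1.le
    have s3 : (pm - 1) * g b * (a - b) ≤ (pm - 1) * g ξ * (a - b) :=
      mul_le_mul_of_nonneg_right s2 hab.le
    linarith
  -- main estimate for 0 ≤ b < a
  have key2 : ∀ a b : ℝ, 0 ≤ b → b < a →
      C * G (a - b) ≤ (g a * a - g b * b) * (a - b) := by
    intro a b hb hba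
    have hhpos : (0:ℝ) < a - b := by linarith
    have hGh := hGle (a - b) hhpos.le
    have hGhnn := hGnn (a - b)
    rcases le_or_gt b (a / 2) with hcase | hcase
    · have hapos : (0:ℝ) < a := lt_of_le_of_lt hb hba
      have hga : 0 ≤ g a := hgnn a hapos.le
      have hgb : g b ≤ g a := hgmono (Set.mem_Ici.2 hb) (Set.mem_Ici.2 hapos.le) hba.le
      have h1 : g b * b ≤ g a * (a / 2) := by
        calc g b * b ≤ g a * b := mul_le_mul_of_nonneg_right hgb hb
          _ ≤ g a * (a / 2) := mul_le_mul_of_nonneg_left hcase hga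
      have hha : a - b ≤ a := by linarith
      have h2 : g (a - b) ≤ g a := hgmono (Set.mem_Ici.2 hhpos.le) (Set.mem_Ici.2 hapos.le) hha
      have h3 : g (a - b) * (a - b) ≤ g a * a := mul_le_mul h2 hha hhpos.le hga
      have s1 : C * G (a - b) ≤ G (a - b) := mul_le_of_le_one_left hGhnn hC1
      have s2 := mul_le_mul_of_nonneg_right h3 hhpos.le
      have s3 := mul_le_mul_of_nonneg_right h1 hhpos.le
      nlinarith [s1, s2, s3, hGh]
    · have hbpos : (0:ℝ) < b := by
        have : (0:ℝ) < a := lt_of_le_of_lt hb hba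
        linarith
      have hhb : a - b < b := by linarith
      have hmvt := hkeyMVT b a hbpos hba
      have hgh : g (a - b) ≤ g b :=
        hgmono (Set.mem_Ici.2 hhpos.le) (Set.mem_Ici.2 hbpos.le) hhb.le
      have hghnn : 0 ≤ g (a - b) := hgnn _ hhpos.le
      have s1 : C * G (a - b) ≤ (pm - 1) * G (a - b) :=
        mul_le_mul_of_nonneg_right hCpm hGhnn
      have s2 : (pm - 1) * G (a - b) ≤ (pm - 1) * (g (a - b) * ((a - b) * (a - b)) / 2) :=
        mul_le_mul_of_nonneg_left hGh hpm1.le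
      have s3 : (pm - 1) * g (a - b) * ((a - b) * (a - b))
          ≤ (pm - 1) * g b * ((a - b) * (a - b)) :=
        mul_le_mul_of_nonneg_right (mul_le_mul_of_nonneg_left hgh hpm1.le)
          (mul_nonneg hhpos.le hhpos.le)
      have s4 := mul_le_mul_of_nonneg_right hmvt hhpos.le
      have s5 : 0 ≤ (pm - 1) * g (a - b) * ((a - b) * (a - b)) :=
        mul_nonneg (mul_nonneg hpm1.le hghnn) (mul_nonneg hhpos.le hhpos.le)
      nlinarith [s1, s2, s3, s4, s5]
  refine ⟨C, hCpos, ?_⟩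
  have main : ∀ a b : ℝ, b < a →
      C * G (a - b) ≤ (g |a| * a - g |b| * b) * (a - b) := by
    intro a b hba
    rcases le_or_gt 0 b with hb | hb
    · rw [abs_of_nonneg hb, abs_of_nonneg (le_trans hb hba.le)]
      exact key2 a b hb hba
    rcases lt_or_ge 0 a with ha | ha
    · -- b < 0 < a
      have hhpos : (0:ℝ) < a - b := by linarith
      have hh2 : (0:ℝ) < (a - b) / 2 := by linarith
      have hGh := hGle (a - b) hhpos.le
      have hGhnn := hGnn (a - b)
      have hdd := hdouble (a - b) hhpos
      have hghnn : 0 ≤ g (a - b) := hgnn _ hhpos.le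
      have hg2nn : 0 ≤ g ((a - b) / 2) := hgnn _ hh2.le
      rw [abs_of_pos ha, abs_of_neg hb]
      have hgbnn : 0 ≤ g (-b) := hgnn _ (by linarith)
      have hfb : g (-b) * b ≤ 0 := mul_nonpos_of_nonneg_of_nonpos hgbnn hb.le
      rcases le_or_gt ((a - b) / 2) a with hc | hc
      · have h1 : g ((a - b) / 2) * ((a - b) / 2) ≤ g a * a :=
          mul_le_mul (hgmono (Set.mem_Ici.2 hh2.le) (Set.mem_Ici.2 ha.le) hc) hc hh2.le
            (hgnn a ha.le)
        have hfa := mul_nonneg (hgnn a ha.le) ha.le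
        have s1 : C * G (a - b) ≤ D * G (a - b) := mul_le_mul_of_nonneg_right hCD hGhnn
        have s2 : D * G (a - b) ≤ D * (g (a - b) * ((a - b) * (a - b)) / 2) :=
          mul_le_mul_of_nonneg_left hGh h2pos.le
        have s3 := mul_le_mul_of_nonneg_right hdd
          (by positivity : (0:ℝ) ≤ ((a - b) * (a - b)) / 2)
        have s4 := mul_le_mul_of_nonneg_right h1 hhpos.le
        have s5 := mul_le_mul_of_nonneg_right hfb hhpos.le
        nlinarith [s1, s2, s3, s4, s5]
      · have hbb : (a - b) / 2 ≤ -b := by linarith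
        have h1 : g ((a - b) / 2) * ((a - b) / 2) ≤ g (-b) * (-b) :=
          mul_le_mul (hgmono (Set.mem_Ici.2 hh2.le) (Set.mem_Ici.2 (by linarith)) hbb) hbb
            hh2.le hgbnn
        have hfa := mul_nonneg (hgnn a ha.le) ha.le
        have s1 : C * G (a - b) ≤ D * G (a - b) := mul_le_mul_of_nonneg_right hCD hGhnn
        have s2 : D * G (a - b) ≤ D * (g (a - b) * ((a - b) * (a - b)) / 2) :=
          mul_le_mul_of_nonneg_left hGh h2pos.le
        have s3 := mul_le_mul_of_nonneg_right hdd
          (by positivity : (0:ℝ) ≤ ((a - b) * (a - b)) / 2)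
        have s4 := mul_le_mul_of_nonneg_right h1 hhpos.le
        have s5 := mul_le_mul_of_nonneg_right hfa hhpos.le
        nlinarith [s1, s2, s3, s4, s5]
    · -- b < a ≤ 0
      have hkey := key2 (-b) (-a) (by linarith) (by linarith)
      have e1 : -b - -a = a - b := by ring
      rw [e1] at hkey
      rw [abs_of_nonpos ha, abs_of_nonpos (by linarith : b ≤ 0)]
      have e2 : (g (-b) * (-b) - g (-a) * (-a)) * (a - b)
          = (g (-a) * a - g (-b) * b) * (a - b) := by ring
      linarith [e2 ▸ hkey]
  intro a b
  rcases lt_trichotomy a b with hab | hab | hab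
  · have h1 := main b a hab
    rw [abs_sub_comm a b, abs_of_pos (sub_pos.2 hab)]
    have e : (g |b| * b - g |a| * a) * (b - a) = (g |a| * a - g |b| * b) * (a - b) := by
      ring
    linarith [e ▸ h1]
  · subst hab
    have : G (|a - a|) = 0 := by
      rw [hG]
      simp
    rw [this]
    simp
  · have := main a b hab
    rw [abs_of_pos (sub_pos.2 hab)]
    exact this
end

section
/- (Modified Vitali covering lemma) Let 0 < ε < 1 and let C ⊂ D ⊂ B₁ ⊂ ℝⁿ be measurable sets with |C| < ε|B₁|, such that for every x ∈ B₁ and every r > 0, if |C ∩ B_r(x)| ≥ ε|B_r| then B_r(x) ∩ B₁ ⊂ D. Then |C| ≤ 10ⁿ ε |D|. -/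
/-!
Almost every point of `C` is a density point, so at such a point `x` the set of radii `r` with
`|C ∩ B_r(x)| ≥ ε|B_r|` is nonempty; it lies in `(0, 2)` because `|C| < ε|B₁|`. Pick such an `r`
with `5r` above its supremum, so that `C` has density `< ε` in `B_{5r}(x)`. A Vitali subfamily of
these balls has disjoint members `B_r(x)`, each with `B_r(x) ∩ B₁ ⊆ D`, and its enlargements cover
almost all of `C`. Each enlargement carries `|C ∩ B_{5r}(x)| ≤ 5ⁿ ε |B_r| ≤ 10ⁿ ε |B_r(x) ∩ B₁|`,
the last step because `B_r(x) ∩ B₁` contains a ball of radius `r/2` when `|x| < 1` and `r ≤ 2`.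
-/

open MeasureTheory Metric ENNReal Filter Set Topology Module

theorem exists_mem_mul_notMem_of_bddAbove {S : Set ℝ} (hne : S.Nonempty) (hbdd : BddAbove S)
    (hpos : S ⊆ Ioi 0) {c : ℝ} (hc : 1 < c) : ∃ r ∈ S, c * r ∉ S := by
  obtain ⟨r₀, hr₀⟩ := hne
  have hsup : 0 < sSup S := (hpos hr₀).trans_le (le_csSup hbdd hr₀)
  obtain ⟨r, hrS, hr⟩ := exists_lt_of_lt_csSup ⟨r₀, hr₀⟩ (div_lt_self hsup hc)
  refine ⟨r, hrS, fun hcr => (le_csSup hbdd hcr).not_gt ?_⟩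
  rwa [div_lt_iff₀' (zero_lt_one.trans hc)] at hr

section NormedSpace

variable {E : Type*} [NormedAddCommGroup E] [NormedSpace ℝ E]

theorem ball_smul_subset_ball_inter_ball_zero_one {x : E} (hx : ‖x‖ ≤ 1) {r : ℝ} (hr₀ : 0 ≤ r)
    (hr₂ : r ≤ 2) : ball ((1 - r / 2) • x) (r / 2) ⊆ ball x r ∩ ball 0 1 := by
  have hdist : dist ((1 - r / 2) • x) x = r / 2 * ‖x‖ := by
    rw [dist_eq_norm, show (1 - r / 2) • x - x = -(r / 2) • x by module, norm_smul,
      Real.norm_eq_abs, abs_neg, abs_of_nonneg (by linarith)]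
  have hnorm : dist ((1 - r / 2) • x) 0 = (1 - r / 2) * ‖x‖ := by
    rw [dist_zero_right, norm_smul, Real.norm_eq_abs, abs_of_nonneg (by linarith)]
  refine subset_inter (ball_subset_ball' ?_) (ball_subset_ball' ?_)
  · rw [hdist]; nlinarith
  · rw [hnorm]; nlinarith

end NormedSpace

section DenseRadii

variable {E : Type*} [NormedAddCommGroup E] [MeasurableSpace E] (μ : Measure E)

def denseRadii (C : Set E) (δ : ℝ≥0∞) (x : E) : Set ℝ :=
  {r | 0 < r ∧ δ * μ (ball x r) ≤ μ (C ∩ ball x r)}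

variable {μ} {C : Set E} {δ : ℝ≥0∞}

theorem denseRadii_subset_Ioo (hsmall : μ C < δ * μ (ball 0 1)) {x : E}
    (hx : ‖x‖ < 1) : denseRadii μ C δ x ⊆ Ioo 0 2 := by
  rintro r ⟨hr₀, hr⟩
  refine ⟨hr₀, lt_of_not_ge fun h₂ => hsmall.not_ge ?_⟩
  have hball : ball (0 : E) 1 ⊆ ball x r := ball_subset_ball' (by rw [dist_zero_left]; linarith)
  calc δ * μ (ball 0 1) ≤ δ * μ (ball x r) := by gcongr
    _ ≤ μ (C ∩ ball x r) := hr
    _ ≤ μ C := measure_mono inter_subset_left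

theorem exists_mem_denseRadii_five_mul_notMem (hsmall : μ C < δ * μ (ball 0 1)) {x : E}
    (hx : ‖x‖ < 1) (hne : (denseRadii μ C δ x).Nonempty) :
    ∃ r ∈ denseRadii μ C δ x, r < 2 ∧ 5 * r ∉ denseRadii μ C δ x := by
  have hIoo := denseRadii_subset_Ioo hsmall hx
  obtain ⟨r, hr, hr5⟩ := exists_mem_mul_notMem_of_bddAbove hne (bddAbove_Ioo.mono hIoo)
    (hIoo.trans Ioo_subset_Ioi_self) (by norm_num : (1 : ℝ) < 5)
  exact ⟨r, hr, (hIoo hr).2, hr5⟩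

end DenseRadii

section AddHaar

variable {E : Type*} [NormedAddCommGroup E] [NormedSpace ℝ E] [FiniteDimensional ℝ E]
  [MeasurableSpace E] [BorelSpace E] (μ : Measure E) [μ.IsAddHaarMeasure]

theorem addHaar_ball_mul_eq (x y : E) {k : ℝ} (hk : 0 < k) (s : ℝ) :
    μ (ball x (k * s)) = ENNReal.ofReal k ^ finrank ℝ E * μ (ball y s) := by
  rw [Measure.addHaar_ball_mul_of_pos μ x hk, Measure.addHaar_ball_center μ y,
    ENNReal.ofReal_pow hk.le]

theorem addHaar_inter_closedBall_le (s : Set E) (x : E) {r : ℝ} (hr : r ≠ 0) :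
    μ (s ∩ closedBall x r) ≤ μ (s ∩ ball x r) :=
  calc μ (s ∩ closedBall x r) ≤ μ (s ∩ ball x r ∪ sphere x r) := by
        rw [← ball_union_sphere, inter_union_distrib_left]
        exact measure_mono (union_subset_union_right _ inter_subset_right)
    _ ≤ μ (s ∩ ball x r) + μ (sphere x r) := measure_union_le _ _
    _ = μ (s ∩ ball x r) := by rw [Measure.addHaar_sphere_of_ne_zero μ x hr, add_zero]

theorem addHaar_ball_le_two_pow_mul_inter_ball_zero_one {x : E} (hx : ‖x‖ ≤ 1) {r : ℝ}
    (hr₀ : 0 < r) (hr₂ : r ≤ 2) :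
    μ (ball x r) ≤ 2 ^ finrank ℝ E * μ (ball x r ∩ ball 0 1) :=
  calc μ (ball x r) = 2 ^ finrank ℝ E * μ (ball ((1 - r / 2) • x) (r / 2)) := by
        rw [← ofReal_ofNat 2, ← addHaar_ball_mul_eq μ x _ two_pos, mul_div_cancel₀ r two_ne_zero]
    _ ≤ 2 ^ finrank ℝ E * μ (ball x r ∩ ball 0 1) := by
        gcongr; exact ball_smul_subset_ball_inter_ball_zero_one hx hr₀.le hr₂

variable {μ} {C : Set E} {δ : ℝ≥0∞}

theorem denseRadii_nonempty_of_tendsto (hδ : δ < 1) {x : E}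
    (hx : Tendsto (fun r => μ (C ∩ closedBall x r) / μ (closedBall x r)) (𝓝[>] 0) (𝓝 1)) :
    (denseRadii μ C δ x).Nonempty := by
  obtain ⟨r, hratio, hr₀⟩ := ((hx.eventually (lt_mem_nhds hδ)).and self_mem_nhdsWithin).exists
  refine ⟨r, hr₀, ?_⟩
  calc δ * μ (ball x r) ≤ δ * μ (closedBall x r) := by gcongr; exact ball_subset_closedBall
    _ ≤ μ (C ∩ closedBall x r) := ENNReal.mul_le_of_le_div hratio.le
    _ ≤ μ (C ∩ ball x r) := addHaar_inter_closedBall_le μ C x hr₀.ne'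

theorem addHaar_inter_closedBall_four_mul_le {x : E} (hx : ‖x‖ ≤ 1) {r : ℝ} (hr₀ : 0 < r)
    (hr₂ : r ≤ 2) (hsparse : 5 * r ∉ denseRadii μ C δ x) :
    μ (C ∩ closedBall x (4 * r)) ≤ 10 ^ finrank ℝ E * δ * μ (ball x r ∩ ball 0 1) :=
  calc μ (C ∩ closedBall x (4 * r)) ≤ μ (C ∩ ball x (5 * r)) := by
        gcongr; exact closedBall_subset_ball (by linarith)
    _ ≤ δ * μ (ball x (5 * r)) := le_of_not_ge fun h => hsparse ⟨by positivity, h⟩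
    _ = δ * (5 ^ finrank ℝ E * μ (ball x r)) := by
        rw [addHaar_ball_mul_eq μ x x (by norm_num : (0 : ℝ) < 5), ofReal_ofNat]
    _ ≤ δ * (5 ^ finrank ℝ E * (2 ^ finrank ℝ E * μ (ball x r ∩ ball 0 1))) := by
        gcongr; exact addHaar_ball_le_two_pow_mul_inter_ball_zero_one μ hx hr₀ hr₂
    _ = 10 ^ finrank ℝ E * δ * μ (ball x r ∩ ball 0 1) := by
        rw [show (10 : ℝ≥0∞) = 5 * 2 by norm_num, mul_pow]; ring

theorem addHaar_le_ten_pow_finrank_mul_of_dense_ball_subset {D : Set E} (hδ : δ < 1)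
    (hCD : C ⊆ D) (hD : D ⊆ ball 0 1) (hsmall : μ C < δ * μ (ball 0 1))
    (hdense : ∀ x ∈ ball (0 : E) 1, ∀ r > 0,
      δ * μ (ball x r) ≤ μ (C ∩ ball x r) → ball x r ∩ ball 0 1 ⊆ D) :
    μ C ≤ 10 ^ finrank ℝ E * δ * μ D := by
  have hC : C ⊆ ball 0 1 := hCD.trans hD
  set C' := {x ∈ C | (denseRadii μ C δ x).Nonempty}
  have hCC' : μ C ≤ μ C' := measure_mono_ae <|
    (ae_imp_of_ae_restrict (Besicovitch.ae_tendsto_measure_inter_div μ C)).mono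
      fun x hx hxC => ⟨hxC, denseRadii_nonempty_of_tendsto hδ (hx hxC)⟩
  choose! ρ hρ hρ₂ hρ₅ using fun x (hx : x ∈ C') =>
    exists_mem_denseRadii_five_mul_notMem hsmall (mem_ball_zero_iff.1 (hC hx.1)) hx.2
  have hρ₀ : ∀ x ∈ C', 0 < ρ x := fun x hx => (hρ x hx).1
  -- any enlargement factor in `(3, 5)` works, since `closedBall x (4 * ρ x) ⊆ ball x (5 * ρ x)`
  obtain ⟨u, huC', hdisj, hcov⟩ := Vitali.exists_disjoint_subfamily_covering_enlargement_closedBall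
    C' id ρ 2 (fun x hx => (hρ₂ x hx).le) 4 (by norm_num)
  have hu : u.Countable := hdisj.countable_of_nonempty_interior fun b hb =>
    ⟨b, ball_subset_interior_closedBall (mem_ball_self (hρ₀ b (huC' hb)))⟩
  calc μ C ≤ μ C' := hCC'
    _ ≤ μ (⋃ b ∈ u, C ∩ closedBall b (4 * ρ b)) := measure_mono fun x hx => by
        obtain ⟨b, hb, hsub⟩ := hcov x hx
        exact mem_biUnion hb ⟨hx.1, hsub (mem_closedBall_self (hρ₀ x hx).le)⟩
    _ ≤ ∑' b : u, μ (C ∩ closedBall b (4 * ρ b)) := measure_biUnion_le μ hu _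
    _ ≤ ∑' b : u, 10 ^ finrank ℝ E * δ * μ (ball (b : E) (ρ b) ∩ ball 0 1) :=
        ENNReal.tsum_le_tsum fun ⟨b, hb⟩ => addHaar_inter_closedBall_four_mul_le
          (mem_ball_zero_iff.1 (hC (huC' hb).1)).le (hρ₀ b (huC' hb))
          (hρ₂ b (huC' hb)).le (hρ₅ b (huC' hb))
    _ = 10 ^ finrank ℝ E * δ * μ (⋃ b ∈ u, ball b (ρ b) ∩ ball 0 1) := by
        have hdisj' : u.PairwiseDisjoint fun b => ball b (ρ b) ∩ ball 0 1 :=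
          hdisj.mono fun b => inter_subset_left.trans ball_subset_closedBall
        rw [ENNReal.tsum_mul_left,
          measure_biUnion hu hdisj' fun b _ => measurableSet_ball.inter measurableSet_ball]
    _ ≤ 10 ^ finrank ℝ E * δ * μ D := by
        gcongr
        exact iUnion₂_subset fun b hb =>
          hdense b (hC (huC' hb).1) (ρ b) (hρ₀ b (huC' hb)) (hρ b (huC' hb)).2

end AddHaar

theorem stmt_9_general (n : ℕ) (ε : ℝ) (hε1 : ε < 1)
    (C D : Set (EuclideanSpace ℝ (Fin n)))
    (hCD : C ⊆ D) (hD : D ⊆ ball (0 : EuclideanSpace ℝ (Fin n)) 1)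
    (hCsmall : volume C < ENNReal.ofReal ε * volume (ball (0 : EuclideanSpace ℝ (Fin n)) 1))
    (hprop : ∀ x ∈ ball (0 : EuclideanSpace ℝ (Fin n)) 1, ∀ r > (0:ℝ),
      ENNReal.ofReal ε * volume (ball x r) ≤ volume (C ∩ ball x r) →
      ball x r ∩ ball (0 : EuclideanSpace ℝ (Fin n)) 1 ⊆ D) :
    volume C ≤ (10:ℝ≥0∞) ^ n * ENNReal.ofReal ε * volume D := by
  have h := addHaar_le_ten_pow_finrank_mul_of_dense_ball_subset
    (ENNReal.ofReal_lt_one.2 hε1) hCD hD hCsmall hprop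
  rwa [finrank_euclideanSpace_fin] at h

/-- Modified Vitali covering lemma: if `C ⊆ D ⊆ B₁`, `|C| < ε|B₁|`
and whenever `|C ∩ B_r(x)| ≥ ε|B_r(x)|` for `x ∈ B₁` one has `B_r(x) ∩ B₁ ⊆ D`,
then `|C| ≤ 10ⁿ ε |D|`. -/
theorem stmt_9 (n : ℕ) (ε : ℝ) (hε0 : 0 < ε) (hε1 : ε < 1)
    (C D : Set (EuclideanSpace ℝ (Fin n)))
    (hCmeas : MeasurableSet C) (hDmeas : MeasurableSet D)
    (hCD : C ⊆ D) (hD : D ⊆ ball (0 : EuclideanSpace ℝ (Fin n)) 1)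
    (hCsmall : volume C < ENNReal.ofReal ε * volume (ball (0 : EuclideanSpace ℝ (Fin n)) 1))
    (hprop : ∀ x ∈ ball (0 : EuclideanSpace ℝ (Fin n)) 1, ∀ r > (0:ℝ),
      ENNReal.ofReal ε * volume (ball x r) ≤ volume (C ∩ ball x r) →
      ball x r ∩ ball (0 : EuclideanSpace ℝ (Fin n)) 1 ⊆ D) :
    volume C ≤ (10:ℝ≥0∞) ^ n * ENNReal.ofReal ε * volume D :=
  stmt_9_general n ε hε1 C D hCD hD hCsmall hprop
end
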